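/- (Lemma 4.1, first part: dichotomy for the twisted Sierpiński gasket.) Let x0, y0, z0 > 0. There exists a twisted compatible resistance sequence (x_n, y_n, z_n)_{n≥0} of positive triples with initial triple (x0, y0, z0) if and only if, after a permutation of the three coordinates, x0 ≥ y0 = z0. In that case x_n ≥ y_n = z_n > 0 for all n ≥ 0 (in the same coordinates), and the sequence is uniquely determined by (x0, y0, z0). -/

import Mathlib

noncomputable section

/-- Twisted Δ-Y transfer term `ψ(x; y, z) = 2yz/(x+y+z)`. -/
def psi (x y z : ℝ) : ℝ := 2 * y * z / (x + y + z)

/-- A twisted compatible resistance sequence of positive triples. -/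
def IsTwistedCompat (X Y Z : ℕ → ℝ) : Prop :=
  (∀ n, 0 < X n ∧ 0 < Y n ∧ 0 < Z n) ∧
  ∀ n, X n = X (n + 1) + psi (X (n + 1)) (Y (n + 1)) (Z (n + 1)) ∧
       Y n = Y (n + 1) + psi (Y (n + 1)) (Z (n + 1)) (X (n + 1)) ∧
       Z n = Z (n + 1) + psi (Z (n + 1)) (X (n + 1)) (Y (n + 1))

/-! Each coordinate of a compatible sequence decreases, since `x_{n-1} = x_n + ψ > x_n`, so it
converges. The identity `(x + ψ(x; y, z)) - (y + ψ(y; z, x)) = (x - y)(x + y - z)/(x + y + z)`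
shows that `|y_n - z_n|` is nondecreasing in `n`, hence bounded by the distance of the limits,
and passing to the limit in the recursion shows that at most one limit is nonzero. So two
coordinates, say `y` and `z`, both tend to `0` and therefore agree for all `n`; then `x_n - y_n`
keeps its sign, which has to be that of its limit, so `x_n ≥ y_n`. Conversely, on triples with
`x ≥ y = z` the backward step can be solved (the ratio `x_n / y_n` is a root `≥ 1` of a quadratic)
and is injective, which gives existence and uniqueness. -/

open Filter Topology

lemma psi_pos {x y z : ℝ} (hx : 0 < x) (hy : 0 < y) (hz : 0 < z) : 0 < psi x y z := by
  unfold psi; positivity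

lemma psi_comm (x y z : ℝ) : psi x y z = psi x z y := by
  unfold psi; rw [mul_right_comm, add_right_comm]

lemma add_psi_sub_add_psi {x y z : ℝ} (hs : x + y + z ≠ 0) :
    (x + psi x y z) - (y + psi y z x) = (x - y) * (x + y - z) / (x + y + z) := by
  unfold psi
  rw [show y + z + x = x + y + z by ring]
  field_simp
  ring

lemma abs_add_psi_sub_add_psi_le {x y z : ℝ} (hx : 0 < x) (hy : 0 < y) (hz : 0 < z) :
    |(x + psi x y z) - (y + psi y z x)| ≤ |x - y| := by
  have hs : 0 < x + y + z := by positivity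
  rw [add_psi_sub_add_psi hs.ne', abs_div, abs_mul, abs_of_pos hs, div_le_iff₀ hs]
  exact mul_le_mul_of_nonneg_left (abs_le.mpr ⟨by linarith, by linarith⟩) (abs_nonneg _)

lemma eq_of_add_psi_eq {a b a' b' : ℝ} (hb : 0 < b) (hb' : 0 < b') (hba : b ≤ a)
    (hba' : b' ≤ a') (h1 : a + psi a b b = a' + psi a' b' b')
    (h2 : b + psi b b a = b' + psi b' b' a') : a = a' ∧ b = b' := by
  have ha : 0 < a := hb.trans_le hba
  have ha' : 0 < a' := hb'.trans_le hba'
  have hs : a + b + b ≠ 0 := by positivity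
  have hs' : a' + b' + b' ≠ 0 := by positivity
  unfold psi at h1 h2
  field_simp at h1 h2
  have hpos : 0 < 3 * a * a' + 2 * a * b' + 2 * a' * b - 2 * b * b' := by
    nlinarith [mul_nonneg (sub_nonneg.mpr hba) (sub_nonneg.mpr hba'),
      mul_nonneg (sub_nonneg.mpr hba) hb'.le, mul_nonneg (sub_nonneg.mpr hba') hb.le,
      mul_pos hb hb']
  have hratio : a * b' = a' * b := by
    have : (a * b' - a' * b) * (3 * a * a' + 2 * a * b' + 2 * a' * b - 2 * b * b') *
        (a' + b' + b') = 0 := by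
      linear_combination (b' * (b' + b' + a') + 2 * b' * a') * h1 -
        (a' * (a' + b' + b') + 2 * b' * b') * h2
    simpa [hpos.ne', hs', sub_eq_zero] using this
  have hbb : b = b' := by
    have : (b - b') * (3 * a * a' * b' + 8 * a' * b * b' + 4 * b * b' * b') = 0 := by
      linear_combination b' * h2 - (6 * b * b' - 2 * b' ^ 2) * hratio
    have hK : 3 * a * a' * b' + 8 * a' * b * b' + 4 * b * b' * b' ≠ 0 := by positivity
    simpa [hK, sub_eq_zero] using this
  subst hbb
  exact ⟨mul_right_cancel₀ hb.ne' hratio, rfl⟩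

/-- The ratio `t = a / b` of a backward step `(a, b, b) ↦ (x, y, y)` solves this quadratic. -/
lemma exists_one_le_root {x y : ℝ} (hy : 0 < y) (hyx : y ≤ x) :
    ∃ t, 1 ≤ t ∧ y * (t ^ 2 + 2 * t + 2) = x * (3 * t + 2) := by
  set g : ℝ → ℝ := fun t => y * (t ^ 2 + 2 * t + 2) - x * (3 * t + 2)
  set T := 3 * x / y
  have hyT : y * T = 3 * x := mul_div_cancel₀ _ hy.ne'
  have hT : 1 ≤ T := by rw [le_div_iff₀ hy]; linarith
  have hgT : g T = 4 * x + 2 * y := by simp only [g]; linear_combination (T + 2) * hyT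
  obtain ⟨t, ⟨ht1, -⟩, ht⟩ := intermediate_value_Icc hT (by fun_prop : Continuous g).continuousOn
    (show (0 : ℝ) ∈ Set.Icc (g 1) (g T) from ⟨by simp only [g]; linarith, by linarith⟩)
  exact ⟨t, ht1, sub_eq_zero.mp ht⟩

lemma exists_add_psi_eq {x y : ℝ} (hy : 0 < y) (hyx : y ≤ x) :
    ∃ a b, 0 < b ∧ b ≤ a ∧ a + psi a b b = x ∧ b + psi b b a = y := by
  obtain ⟨t, ht1, ht⟩ := exists_one_le_root hy hyx
  have ht0 : 0 < t := by linarith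
  have hb : 0 < y * (t + 2) / (3 * t + 2) := by positivity
  refine ⟨t * (y * (t + 2) / (3 * t + 2)), _, hb, le_mul_of_one_le_left hb.le ht1, ?_, ?_⟩
  · unfold psi
    field_simp
    linear_combination (t + 2) * ht
  · unfold psi
    field_simp
    ring

def IsXDominant (X Y Z : ℕ → ℝ) : Prop :=
  ∀ n, Y n = Z n ∧ Y n ≤ X n

namespace IsTwistedCompat

variable {X Y Z X' Y' Z' : ℕ → ℝ} {a b c : ℝ}

lemma rotate (h : IsTwistedCompat X Y Z) : IsTwistedCompat Y Z X :=
  ⟨fun n => ⟨(h.1 n).2.1, (h.1 n).2.2, (h.1 n).1⟩, fun n => ⟨(h.2 n).2.1, (h.2 n).2.2, (h.2 n).1⟩⟩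

lemma antitone (h : IsTwistedCompat X Y Z) : Antitone X :=
  antitone_nat_of_succ_le fun n => by
    obtain ⟨hx, hy, hz⟩ := h.1 (n + 1)
    linarith [(h.2 n).1, psi_pos hx hy hz]

lemma exists_tendsto (h : IsTwistedCompat X Y Z) : ∃ a, Tendsto X atTop (𝓝 a) :=
  ⟨_, tendsto_atTop_ciInf h.antitone ⟨0, by rintro _ ⟨n, rfl⟩; exact (h.1 n).1.le⟩⟩

lemma abs_sub_le_succ (h : IsTwistedCompat X Y Z) (n : ℕ) :
    |Y n - Z n| ≤ |Y (n + 1) - Z (n + 1)| := by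
  obtain ⟨hx, hy, hz⟩ := h.1 (n + 1)
  obtain ⟨-, hYn, hZn⟩ := h.2 n
  rw [hYn, hZn]
  exact abs_add_psi_sub_add_psi_le hy hz hx

lemma abs_sub_le_of_tendsto (h : IsTwistedCompat X Y Z) (hb : Tendsto Y atTop (𝓝 b))
    (hc : Tendsto Z atTop (𝓝 c)) (n : ℕ) : |Y n - Z n| ≤ |b - c| :=
  (monotone_nat_of_le_succ h.abs_sub_le_succ).ge_of_tendsto (hb.sub hc).abs n

lemma eq_of_tendsto (h : IsTwistedCompat X Y Z) (hb : Tendsto Y atTop (𝓝 b))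
    (hc : Tendsto Z atTop (𝓝 b)) : Y = Z :=
  funext fun n => by simpa [sub_eq_zero] using h.abs_sub_le_of_tendsto hb hc n

lemma lim_mul_eq_zero (h : IsTwistedCompat X Y Z) (ha : Tendsto X atTop (𝓝 a))
    (hb : Tendsto Y atTop (𝓝 b)) (hc : Tendsto Z atTop (𝓝 c)) : b * c = 0 := by
  have ha0 : 0 ≤ a := ge_of_tendsto' ha fun n => (h.1 n).1.le
  have hb0 : 0 ≤ b := ge_of_tendsto' hb fun n => (h.1 n).2.1.le
  have hc0 : 0 ≤ c := ge_of_tendsto' hc fun n => (h.1 n).2.2.le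
  rcases (add_nonneg (add_nonneg ha0 hb0) hc0).eq_or_lt with hs | hs
  · rw [show b = 0 by linarith, zero_mul]
  have shift {W : ℕ → ℝ} {w : ℝ} (hw : Tendsto W atTop (𝓝 w)) :
      Tendsto (fun n => W (n + 1)) atTop (𝓝 w) := hw.comp (tendsto_add_atTop_nat 1)
  have hpsi : Tendsto (fun n => psi (X (n + 1)) (Y (n + 1)) (Z (n + 1))) atTop
      (𝓝 (psi a b c)) :=
    ((tendsto_const_nhds.mul (shift hb)).mul (shift hc)).div
      (((shift ha).add (shift hb)).add (shift hc)) hs.ne'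
  have hstep : Tendsto (fun n => X n - X (n + 1)) atTop (𝓝 0) := by
    simpa using ha.sub (shift ha)
  have hzero : psi a b c = 0 :=
    tendsto_nhds_unique (hpsi.congr fun n => by linarith [(h.2 n).1]) hstep
  unfold psi at hzero
  simpa [hs.ne', mul_assoc] using hzero

lemma sign_sub_succ (h : IsTwistedCompat X Y Z) {n : ℕ} (hYZ : Y (n + 1) = Z (n + 1)) :
    SignType.sign (X n - Y n) = SignType.sign (X (n + 1) - Y (n + 1)) := by
  obtain ⟨hx, hy, hz⟩ := h.1 (n + 1)
  obtain ⟨hXn, hYn, -⟩ := h.2 n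
  have hs : 0 < X (n + 1) + Y (n + 1) + Z (n + 1) := by positivity
  rw [hXn, hYn, add_psi_sub_add_psi hs.ne', hYZ, add_sub_cancel_right, mul_div_assoc, sign_mul,
    sign_pos (div_pos hx (hYZ ▸ hs)), mul_one]

lemma sign_sub_eq_sign_sub_zero (h : IsTwistedCompat X Y Z) (hYZ : ∀ n, Y n = Z n) (n : ℕ) :
    SignType.sign (X n - Y n) = SignType.sign (X 0 - Y 0) := by
  induction n with
  | zero => rfl
  | succ n ih => rw [← h.sign_sub_succ (hYZ (n + 1)), ih]

lemma eq_of_eq_zero (h : IsTwistedCompat X Y Z) (hYZ : ∀ n, Y n = Z n) (h0 : X 0 = Y 0)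
    (n : ℕ) : X n = Y n := by
  simpa [h0, sub_eq_zero] using h.sign_sub_eq_sign_sub_zero hYZ n

lemma isXDominant_of_tendsto_zero (h : IsTwistedCompat X Y Z) (ha : Tendsto X atTop (𝓝 a))
    (hb : Tendsto Y atTop (𝓝 0)) (hc : Tendsto Z atTop (𝓝 0)) : IsXDominant X Y Z := by
  have hYZ : ∀ n, Y n = Z n := congrFun (h.eq_of_tendsto hb hc)
  refine fun n => ⟨hYZ n, ?_⟩
  by_contra! hlt
  have hneg : ∀ m, X m - Y m < 0 := fun m => by
    rw [← sign_eq_neg_one_iff, h.sign_sub_eq_sign_sub_zero hYZ,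
      ← h.sign_sub_eq_sign_sub_zero hYZ n, sign_eq_neg_one_iff]
    linarith
  have ha0 : 0 ≤ a := ge_of_tendsto' ha fun m => (h.1 m).1.le
  have ha0' : a ≤ 0 := by simpa using le_of_tendsto' (ha.sub hb) fun m => (hneg m).le
  have hle := h.rotate.rotate.abs_sub_le_of_tendsto ha hb n
  rw [le_antisymm ha0' ha0, sub_zero, abs_zero, abs_nonpos_iff] at hle
  linarith

theorem isXDominant_rotation (h : IsTwistedCompat X Y Z) :
    IsXDominant X Y Z ∨ IsXDominant Y Z X ∨ IsXDominant Z X Y := by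
  obtain ⟨a, ha⟩ := h.exists_tendsto
  obtain ⟨b, hb⟩ := h.rotate.exists_tendsto
  obtain ⟨c, hc⟩ := h.rotate.rotate.exists_tendsto
  have hbc : b * c = 0 := h.lim_mul_eq_zero ha hb hc
  have hca : c * a = 0 := h.rotate.lim_mul_eq_zero hb hc ha
  have hab : a * b = 0 := h.rotate.rotate.lim_mul_eq_zero hc ha hb
  rcases eq_or_ne b 0 with rfl | hb0
  · rcases eq_or_ne c 0 with rfl | hc0
    · exact Or.inl (h.isXDominant_of_tendsto_zero ha hb hc)
    · obtain rfl : a = 0 := (mul_eq_zero.mp hca).resolve_left hc0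
      exact Or.inr (Or.inr (h.rotate.rotate.isXDominant_of_tendsto_zero hc ha hb))
  · obtain rfl : c = 0 := (mul_eq_zero.mp hbc).resolve_left hb0
    obtain rfl : a = 0 := (mul_eq_zero.mp hab).resolve_right hb0
    exact Or.inr (Or.inl (h.rotate.isXDominant_of_tendsto_zero hb hc ha))

lemma isXDominant_of_initial (h : IsTwistedCompat X Y Z) (hYZ : Y 0 = Z 0) (hYX : Y 0 ≤ X 0) :
    IsXDominant X Y Z := by
  rcases h.isXDominant_rotation with hd | hd | hd
  · exact hd
  · have hYZ' := h.rotate.eq_of_eq_zero (fun n => (hd n).1) hYZ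
    exact fun n => ⟨hYZ' n, ((hYZ' n).trans (hd n).1).le⟩
  · have hZX := h.rotate.rotate.eq_of_eq_zero (fun n => (hd n).1) (by linarith [(hd 0).1])
    exact fun n => ⟨by linarith [(hd n).1, hZX n], by linarith [(hd n).1]⟩

lemma eq_of_isXDominant (h : IsTwistedCompat X Y Z) (h' : IsTwistedCompat X' Y' Z')
    (hd : IsXDominant X Y Z) (hd' : IsXDominant X' Y' Z') (hX : X 0 = X' 0) (hY : Y 0 = Y' 0) :
    X = X' ∧ Y = Y' ∧ Z = Z' := by
  have hXY : ∀ n, X n = X' n ∧ Y n = Y' n := by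
    intro n
    induction n with
    | zero => exact ⟨hX, hY⟩
    | succ n ih =>
      obtain ⟨hXn, hYn, -⟩ := h.2 n
      obtain ⟨hXn', hYn', -⟩ := h'.2 n
      rw [← (hd (n + 1)).1] at hXn hYn
      rw [← (hd' (n + 1)).1] at hXn' hYn'
      exact eq_of_add_psi_eq (h.1 (n + 1)).2.1 (h'.1 (n + 1)).2.1 (hd (n + 1)).2
        (hd' (n + 1)).2 (hXn.symm.trans (ih.1.trans hXn')) (hYn.symm.trans (ih.2.trans hYn'))
  refine ⟨funext fun n => (hXY n).1, funext fun n => (hXY n).2, funext fun n => ?_⟩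
  rw [← (hd n).1, ← (hd' n).1, (hXY n).2]

lemma eq_of_initial_eq (h : IsTwistedCompat X Y Z) (h' : IsTwistedCompat X' Y' Z')
    (hX : X 0 = X' 0) (hY : Y 0 = Y' 0) (hZ : Z 0 = Z' 0) : X = X' ∧ Y = Y' ∧ Z = Z' := by
  rcases h.isXDominant_rotation with hd | hd | hd
  · have hd' := h'.isXDominant_of_initial (by rw [← hY, ← hZ]; exact (hd 0).1)
      (by rw [← hY, ← hX]; exact (hd 0).2)
    exact h.eq_of_isXDominant h' hd hd' hX hY
  · have hd' := h'.rotate.isXDominant_of_initial (by rw [← hZ, ← hX]; exact (hd 0).1)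
      (by rw [← hZ, ← hY]; exact (hd 0).2)
    obtain ⟨rfl, rfl, rfl⟩ := h.rotate.eq_of_isXDominant h'.rotate hd hd' hY hZ
    exact ⟨rfl, rfl, rfl⟩
  · have hd' := h'.rotate.rotate.isXDominant_of_initial (by rw [← hX, ← hY]; exact (hd 0).1)
      (by rw [← hX, ← hZ]; exact (hd 0).2)
    obtain ⟨rfl, rfl, rfl⟩ := h.rotate.rotate.eq_of_isXDominant h'.rotate.rotate hd hd' hZ hX
    exact ⟨rfl, rfl, rfl⟩

end IsTwistedCompat

lemma exists_isTwistedCompat {x y : ℝ} (hy : 0 < y) (hyx : y ≤ x) :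
    ∃ X Y Z : ℕ → ℝ, IsTwistedCompat X Y Z ∧ X 0 = x ∧ Y 0 = y ∧ Z 0 = y := by
  have hstep (p : ℝ × ℝ) : ∃ q : ℝ × ℝ, 0 < p.2 → p.2 ≤ p.1 →
      0 < q.2 ∧ q.2 ≤ q.1 ∧ q.1 + psi q.1 q.2 q.2 = p.1 ∧ q.2 + psi q.2 q.2 q.1 = p.2 := by
    by_cases hp : 0 < p.2 ∧ p.2 ≤ p.1
    · obtain ⟨a, b, hab⟩ := exists_add_psi_eq hp.1 hp.2
      exact ⟨(a, b), fun _ _ => hab⟩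
    · exact ⟨p, fun h1 h2 => absurd ⟨h1, h2⟩ hp⟩
  choose pred hpred using hstep
  set P : ℕ → ℝ × ℝ := fun n => pred^[n] (x, y)
  have hPsucc (n : ℕ) : P (n + 1) = pred (P n) := Function.iterate_succ_apply' _ _ _
  have hP (n : ℕ) : 0 < (P n).2 ∧ (P n).2 ≤ (P n).1 := by
    induction n with
    | zero => exact ⟨hy, hyx⟩
    | succ n ih =>
      rw [hPsucc]
      exact ⟨(hpred _ ih.1 ih.2).1, (hpred _ ih.1 ih.2).2.1⟩
  refine ⟨fun n => (P n).1, fun n => (P n).2, fun n => (P n).2,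
    ⟨fun n => ⟨(hP n).1.trans_le (hP n).2, (hP n).1, (hP n).1⟩, fun n => ?_⟩, rfl, rfl, rfl⟩
  obtain ⟨-, -, hX, hY⟩ := hpred _ (hP n).1 (hP n).2
  simp only [hPsucc, hX, hY, psi_comm _ (pred (P n)).1, and_self]

theorem stmt16 (x0 y0 z0 : ℝ) (hx : 0 < x0) (hy : 0 < y0) (hz : 0 < z0) :
    ((∃ X Y Z : ℕ → ℝ, IsTwistedCompat X Y Z ∧ X 0 = x0 ∧ Y 0 = y0 ∧ Z 0 = z0) ↔
      ((y0 = z0 ∧ y0 ≤ x0) ∨ (z0 = x0 ∧ z0 ≤ y0) ∨ (x0 = y0 ∧ x0 ≤ z0))) ∧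
    (∀ X Y Z : ℕ → ℝ, IsTwistedCompat X Y Z → X 0 = x0 → Y 0 = y0 → Z 0 = z0 →
      y0 = z0 → y0 ≤ x0 → ∀ n, Y n = Z n ∧ Y n ≤ X n) ∧
    (∀ X Y Z X' Y' Z' : ℕ → ℝ, IsTwistedCompat X Y Z → IsTwistedCompat X' Y' Z' →
      X 0 = x0 → Y 0 = y0 → Z 0 = z0 → X' 0 = x0 → Y' 0 = y0 → Z' 0 = z0 →
      ∀ n, X n = X' n ∧ Y n = Y' n ∧ Z n = Z' n) := by
  refine ⟨⟨?_, ?_⟩, ?_, ?_⟩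
  · rintro ⟨X, Y, Z, h, rfl, rfl, rfl⟩
    rcases h.isXDominant_rotation with hd | hd | hd
    exacts [Or.inl (hd 0), Or.inr (Or.inl (hd 0)), Or.inr (Or.inr (hd 0))]
  · rintro (⟨rfl, hyx⟩ | ⟨rfl, hzy⟩ | ⟨rfl, hxz⟩)
    · exact exists_isTwistedCompat hy hyx
    · obtain ⟨X, Y, Z, h, hX, hY, hZ⟩ := exists_isTwistedCompat hz hzy
      exact ⟨Z, X, Y, h.rotate.rotate, hZ, hX, hY⟩
    · obtain ⟨X, Y, Z, h, hX, hY, hZ⟩ := exists_isTwistedCompat hx hxz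
      exact ⟨Y, Z, X, h.rotate, hY, hZ, hX⟩
  · rintro X Y Z h rfl rfl rfl hYZ hYX
    exact h.isXDominant_of_initial hYZ hYX
  · intro X Y Z X' Y' Z' h h' hX hY hZ hX' hY' hZ'
    obtain ⟨rfl, rfl, rfl⟩ :=
      h.eq_of_initial_eq h' (hX.trans hX'.symm) (hY.trans hY'.symm) (hZ.trans hZ'.symm)
    exact fun n => ⟨rfl, rfl, rfl⟩
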